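/- arXiv:1809.04590 — 2 statements merged into one kernel-verified Lean document; each statement's English description precedes it below -/
import Mathlib

section
/- Let Ω be an infinite set, let T_P denote the pointwise topology on Ω^Ω, and for each cardinal λ with 1 < λ ≤ |Ω| let I_λ = {f ∈ Ω^Ω : |f(Ω)| < λ}. Let T_{P∪I_λ^1} be the topology on Ω^Ω generated by T_P together with all subsets of Ω^Ω \ I_λ, and let T_{P∪I_λ^2} be the topology generated by T_{P∪I_λ^1} together with the set I_λ. Then: (a) Ω^Ω is a topological semigroup with respect to each of these topologies, and each is Hausdorff; (b) T_{P∪I_λ^1} is strictly contained in T_{P∪I_λ^2} for every 1 < λ ≤ |Ω|; (c) for cardinals 1 < λ < κ ≤ |Ω| and each i ∈ {1,2}, T_{P∪I_κ^i} is strictly contained in T_{P∪I_λ^i}; (d) T_{P∪I_2^2} is the discrete topology. -/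
open Topology

universe u

/-- The pointwise (product of discrete) topology on `Ω → Ω`. -/
def pointwiseTop (Ω : Type u) : TopologicalSpace (Ω → Ω) :=
  @Pi.topologicalSpace Ω (fun _ => Ω) (fun _ => ⊥)

/-- The ideal `I_λ` of transformations of rank `< λ`. -/
def idealSet (Ω : Type u) (lam : Cardinal.{u}) : Set (Ω → Ω) :=
  {f : Ω → Ω | Cardinal.mk (Set.range f) < lam}

/-- The topology generated by the pointwise topology together with all
subsets of the complement of `I_λ`. -/
def topPI1 (Ω : Type u) (lam : Cardinal.{u}) : TopologicalSpace (Ω → Ω) :=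
  TopologicalSpace.generateFrom
    ({U : Set (Ω → Ω) | IsOpen[pointwiseTop Ω] U} ∪
      {A : Set (Ω → Ω) | A ⊆ (idealSet Ω lam)ᶜ})

/-- The topology generated by `topPI1` together with the set `I_λ`. -/
def topPI2 (Ω : Type u) (lam : Cardinal.{u}) : TopologicalSpace (Ω → Ω) :=
  TopologicalSpace.generateFrom
    ({U : Set (Ω → Ω) | IsOpen[topPI1 Ω lam] U} ∪ {idealSet Ω lam})

section Aux

variable {Ω : Type u}


lemma isOpen_inter' {α : Type*} {t : TopologicalSpace α} {s u : Set α}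
    (hs : IsOpen[t] s) (hu : IsOpen[t] u) : IsOpen[t] (s ∩ u) := by
  letI := t; exact hs.inter hu

lemma isOpen_union' {α : Type*} {t : TopologicalSpace α} {s u : Set α}
    (hs : IsOpen[t] s) (hu : IsOpen[t] u) : IsOpen[t] (s ∪ u) := by
  letI := t; exact hs.union hu

lemma isOpen_preimage' {α β : Type*} {t1 : TopologicalSpace α} {t2 : TopologicalSpace β}
    {f : α → β} (hf : Continuous[t1, t2] f) {s : Set β} (hs : IsOpen[t2] s) :
    IsOpen[t1] (f ⁻¹' s) := by
  letI := t1; letI := t2; exact hf.isOpen_preimage s hs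

/-! ### basic openness lemmas -/

lemma pw_le1 (lam : Cardinal.{u}) {V : Set (Ω → Ω)} (hV : IsOpen[pointwiseTop Ω] V) :
    IsOpen[topPI1 Ω lam] V :=
  TopologicalSpace.GenerateOpen.basic V (Or.inl hV)

lemma compl_le1 (lam : Cardinal.{u}) {A : Set (Ω → Ω)} (hA : A ⊆ (idealSet Ω lam)ᶜ) :
    IsOpen[topPI1 Ω lam] A :=
  TopologicalSpace.GenerateOpen.basic A (Or.inr hA)

lemma le12 {lam : Cardinal.{u}} {U : Set (Ω → Ω)} (h : IsOpen[topPI1 Ω lam] U) :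
    IsOpen[topPI2 Ω lam] U :=
  TopologicalSpace.GenerateOpen.basic U (Or.inl h)

lemma ideal_open2 (lam : Cardinal.{u}) : IsOpen[topPI2 Ω lam] (idealSet Ω lam) :=
  TopologicalSpace.GenerateOpen.basic _ (Or.inr rfl)

lemma t1_le_pw (lam : Cardinal.{u}) : topPI1 Ω lam ≤ pointwiseTop Ω :=
  isOpen_implies_isOpen_iff.mp fun _ hs => pw_le1 lam hs

lemma t2_le_t1 (lam : Cardinal.{u}) : topPI2 Ω lam ≤ topPI1 Ω lam :=
  isOpen_implies_isOpen_iff.mp fun _ hs => le12 hs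

/-- a basic box neighbourhood inside a pointwise-open set -/
lemma exists_box {W : Set (Ω → Ω)} (hW : IsOpen[pointwiseTop Ω] W) {h : Ω → Ω} (hh : h ∈ W) :
    ∃ F : Set Ω, F.Finite ∧ {f : Ω → Ω | ∀ x ∈ F, f x = h x} ⊆ W := by
  letI : TopologicalSpace Ω := ⊥
  haveI : DiscreteTopology Ω := ⟨rfl⟩
  have hW' : IsOpen W := hW
  have hmem : W ∈ nhds h := hW'.mem_nhds hh
  rw [nhds_pi, Filter.mem_pi] at hmem
  obtain ⟨F, hF, t, ht, hsub⟩ := hmem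
  refine ⟨F, hF, fun f hf => hsub fun x hx => ?_⟩
  have htx : t x ∈ nhds (h x) := ht x
  rw [nhds_discrete] at htx
  rw [hf x hx]
  exact htx

lemma pw_single (x : Ω) (c : Ω) : IsOpen[pointwiseTop Ω] {g : Ω → Ω | g x = c} := by
  letI : TopologicalSpace Ω := ⊥
  haveI : DiscreteTopology Ω := ⟨rfl⟩
  have h : IsOpen ((fun g : Ω → Ω => g x) ⁻¹' ({c} : Set Ω)) :=
    (continuous_apply x).isOpen_preimage _ (isOpen_discrete _)
  exact h

/-! ### characterisations of the two topologies -/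

lemma isOpen1_iff {lam : Cardinal.{u}} {U : Set (Ω → Ω)} :
    IsOpen[topPI1 Ω lam] U ↔
      ∃ V, IsOpen[pointwiseTop Ω] V ∧ V ⊆ U ∧ U ∩ idealSet Ω lam ⊆ V := by
  constructor
  · intro h
    have h' : TopologicalSpace.GenerateOpen
        ({U : Set (Ω → Ω) | IsOpen[pointwiseTop Ω] U} ∪
          {A : Set (Ω → Ω) | A ⊆ (idealSet Ω lam)ᶜ}) U := h
    clear h
    induction h' with
    | basic s hs =>
      rcases hs with hs | hs
      · exact ⟨s, hs, subset_rfl, Set.inter_subset_left⟩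
      · exact ⟨∅, @isOpen_empty _ (pointwiseTop Ω), Set.empty_subset _,
          fun x hx => absurd hx.2 (hs hx.1)⟩
    | univ =>
      exact ⟨Set.univ, @isOpen_univ _ (pointwiseTop Ω), subset_rfl, Set.inter_subset_left⟩
    | inter s t _ _ IHs IHt =>
      obtain ⟨Vs, hVs, hVsU, hVsI⟩ := IHs
      obtain ⟨Vt, hVt, hVtU, hVtI⟩ := IHt
      exact ⟨Vs ∩ Vt, isOpen_inter' hVs hVt, Set.inter_subset_inter hVsU hVtU,
        fun x hx => ⟨hVsI ⟨hx.1.1, hx.2⟩, hVtI ⟨hx.1.2, hx.2⟩⟩⟩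
    | sUnion S _ IH =>
      choose V hV1 hV2 hV3 using IH
      refine ⟨⋃ (s : Set (Ω → Ω)) (hs : s ∈ S), V s hs, ?_, ?_, ?_⟩
      · letI : TopologicalSpace (Ω → Ω) := pointwiseTop Ω
        exact isOpen_iUnion fun s => isOpen_iUnion fun hs => hV1 s hs
      · intro x hx
        simp only [Set.mem_iUnion] at hx
        obtain ⟨s, hs, hxs⟩ := hx
        exact ⟨s, hs, hV2 s hs hxs⟩
      · rintro x ⟨⟨s, hsS, hxs⟩, hxI⟩
        exact Set.mem_iUnion.mpr ⟨s, Set.mem_iUnion.mpr ⟨hsS, hV3 s hsS ⟨hxs, hxI⟩⟩⟩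
  · rintro ⟨V, hV, hVU, hUI⟩
    have hU : U = V ∪ (U ∩ (idealSet Ω lam)ᶜ) := by
      apply Set.Subset.antisymm
      · intro x hx
        by_cases hxI : x ∈ idealSet Ω lam
        · exact Or.inl (hUI ⟨hx, hxI⟩)
        · exact Or.inr ⟨hx, hxI⟩
      · rintro x (hx | hx)
        exacts [hVU hx, hx.1]
    rw [hU]
    exact isOpen_union' (pw_le1 lam hV) (compl_le1 lam Set.inter_subset_right)

lemma isOpen2_iff {lam : Cardinal.{u}} {U : Set (Ω → Ω)} :
    IsOpen[topPI2 Ω lam] U ↔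
      ∃ W, IsOpen[pointwiseTop Ω] W ∧ U ∩ idealSet Ω lam = W ∩ idealSet Ω lam := by
  constructor
  · intro h
    have h' : TopologicalSpace.GenerateOpen
        ({U : Set (Ω → Ω) | IsOpen[topPI1 Ω lam] U} ∪ {idealSet Ω lam}) U := h
    clear h
    induction h' with
    | basic s hs =>
      rcases hs with hs | hs
      · obtain ⟨V, hV, hVU, hUI⟩ := isOpen1_iff.mp hs
        exact ⟨V, hV, Set.Subset.antisymm (fun x hx => ⟨hUI hx, hx.2⟩)
          (fun x hx => ⟨hVU hx.1, hx.2⟩)⟩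
      · rw [Set.mem_singleton_iff] at hs
        subst hs
        exact ⟨Set.univ, @isOpen_univ _ (pointwiseTop Ω), by simp⟩
    | univ =>
      exact ⟨Set.univ, @isOpen_univ _ (pointwiseTop Ω), rfl⟩
    | inter s t _ _ IHs IHt =>
      obtain ⟨Ws, hWs, hWsE⟩ := IHs
      obtain ⟨Wt, hWt, hWtE⟩ := IHt
      refine ⟨Ws ∩ Wt, isOpen_inter' hWs hWt, ?_⟩
      have hs' := Set.ext_iff.mp hWsE
      have ht' := Set.ext_iff.mp hWtE
      ext x
      have h1 := hs' x
      have h2 := ht' x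
      simp only [Set.mem_inter_iff] at h1 h2 ⊢
      tauto
    | sUnion S _ IH =>
      choose W hW1 hW2 using IH
      refine ⟨⋃ (s : Set (Ω → Ω)) (hs : s ∈ S), W s hs, ?_, ?_⟩
      · letI : TopologicalSpace (Ω → Ω) := pointwiseTop Ω
        exact isOpen_iUnion fun s => isOpen_iUnion fun hs => hW1 s hs
      · ext x
        simp only [Set.mem_inter_iff, Set.mem_sUnion, Set.mem_iUnion]
        constructor
        · rintro ⟨⟨s, hsS, hxs⟩, hxI⟩
          have : x ∈ W s hsS ∩ idealSet Ω lam := by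
            rw [← hW2 s hsS]; exact ⟨hxs, hxI⟩
          exact ⟨⟨s, hsS, this.1⟩, hxI⟩
        · rintro ⟨⟨s, hsS, hxW⟩, hxI⟩
          have : x ∈ s ∩ idealSet Ω lam := by
            rw [hW2 s hsS]; exact ⟨hxW, hxI⟩
          exact ⟨⟨s, hsS, this.1⟩, hxI⟩
  · rintro ⟨W, hW, hUI⟩
    have hU : U = (W ∩ idealSet Ω lam) ∪ (U ∩ (idealSet Ω lam)ᶜ) := by
      ext x
      constructor
      · intro hx
        by_cases hxI : x ∈ idealSet Ω lam
        · have : x ∈ W ∩ idealSet Ω lam := by rw [← hUI]; exact ⟨hx, hxI⟩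
          exact Or.inl this
        · exact Or.inr ⟨hx, hxI⟩
      · rintro (hx | hx)
        · have : x ∈ U ∩ idealSet Ω lam := by rw [hUI]; exact hx
          exact this.1
        · exact hx.1
    rw [hU]
    exact isOpen_union' (isOpen_inter' (le12 (pw_le1 lam hW)) (ideal_open2 lam))
      (le12 (compl_le1 lam Set.inter_subset_right))

/-! ### rank lemmas -/

lemma comp_mem_ideal_left {lam : Cardinal.{u}} {f g : Ω → Ω} (hf : f ∈ idealSet Ω lam) :
    g ∘ f ∈ idealSet Ω lam := by
  have hle : Cardinal.mk (Set.range (g ∘ f)) ≤ Cardinal.mk (Set.range f) := by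
    rw [Set.range_comp]
    exact Cardinal.mk_image_le
  exact lt_of_le_of_lt hle hf

lemma comp_mem_ideal_right {lam : Cardinal.{u}} {f g : Ω → Ω} (hg : g ∈ idealSet Ω lam) :
    g ∘ f ∈ idealSet Ω lam :=
  lt_of_le_of_lt (Cardinal.mk_le_mk_of_subset (Set.range_comp_subset_range f g)) hg

/-! ### continuity -/

lemma prod_le_prod' {α β : Type*} {t1 t1' : TopologicalSpace α} {t2 t2' : TopologicalSpace β}
    (h1 : t1 ≤ t1') (h2 : t2 ≤ t2') :
    (@instTopologicalSpaceProd α β t1 t2) ≤ @instTopologicalSpaceProd α β t1' t2' :=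
  inf_le_inf (induced_mono h1) (induced_mono h2)

lemma comp_cont_pw (Ω : Type u) :
    Continuous[@instTopologicalSpaceProd _ _ (pointwiseTop Ω) (pointwiseTop Ω), pointwiseTop Ω]
      (fun p : (Ω → Ω) × (Ω → Ω) => p.2 ∘ p.1) := by
  letI : TopologicalSpace Ω := ⊥
  haveI : DiscreteTopology Ω := ⟨rfl⟩
  have hev : Continuous fun q : (Ω → Ω) × Ω => q.1 q.2 := by
    rw [continuous_def]
    intro s _
    rw [isOpen_prod_iff]
    intro g y hgy
    have hopen : IsOpen ((fun g' : Ω → Ω => g' y) ⁻¹' ({g y} : Set Ω)) :=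
      (continuous_apply y).isOpen_preimage _ (isOpen_discrete _)
    refine ⟨(fun g' : Ω → Ω => g' y) ⁻¹' ({g y} : Set Ω), ({y} : Set Ω), hopen,
      isOpen_discrete _, rfl, rfl, ?_⟩
    rintro ⟨g', y'⟩ ⟨hg', hy'⟩
    have hy'' : y' = y := hy'
    have hg'' : g' y = g y := hg'
    show g' y' ∈ s
    rw [hy'', hg'']
    exact hgy
  show Continuous fun p : (Ω → Ω) × (Ω → Ω) => p.2 ∘ p.1
  refine continuous_pi fun x => ?_
  exact hev.comp (continuous_snd.prodMk ((continuous_apply x).comp continuous_fst))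

lemma comp_cont1 {Ω : Type u} (lam : Cardinal.{u}) :
    Continuous[@instTopologicalSpaceProd _ _ (topPI1 Ω lam) (topPI1 Ω lam), topPI1 Ω lam]
      (fun p : (Ω → Ω) × (Ω → Ω) => p.2 ∘ p.1) := by
  refine continuous_generateFrom_iff.mpr ?_
  rintro s (hs | hs)
  · have h0 : IsOpen[@instTopologicalSpaceProd _ _ (pointwiseTop Ω) (pointwiseTop Ω)]
        ((fun p : (Ω → Ω) × (Ω → Ω) => p.2 ∘ p.1) ⁻¹' s) :=
      isOpen_preimage' (comp_cont_pw Ω) hs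
    exact h0.mono (prod_le_prod' (t1_le_pw lam) (t1_le_pw lam))
  · refine (@isOpen_prod_iff _ _ (topPI1 Ω lam) (topPI1 Ω lam) _).mpr ?_
    intro f g hfg
    have hnf : f ∉ idealSet Ω lam := fun hf => (hs hfg) (comp_mem_ideal_left hf)
    have hng : g ∉ idealSet Ω lam := fun hg => (hs hfg) (comp_mem_ideal_right hg)
    refine ⟨{f}, {g}, compl_le1 lam ?_, compl_le1 lam ?_, rfl, rfl, ?_⟩
    · intro x hx
      rw [Set.mem_singleton_iff] at hx
      subst hx; exact hnf
    · intro x hx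
      rw [Set.mem_singleton_iff] at hx
      subst hx; exact hng
    · rintro ⟨f', g'⟩ ⟨hf', hg'⟩
      have h1 : f' = f := hf'
      have h2 : g' = g := hg'
      subst h1; subst h2
      exact hfg

lemma comp_cont2 {Ω : Type u} (lam : Cardinal.{u}) :
    Continuous[@instTopologicalSpaceProd _ _ (topPI2 Ω lam) (topPI2 Ω lam), topPI2 Ω lam]
      (fun p : (Ω → Ω) × (Ω → Ω) => p.2 ∘ p.1) := by
  refine continuous_generateFrom_iff.mpr ?_
  rintro s (hs | hs)
  · have h0 : IsOpen[@instTopologicalSpaceProd _ _ (topPI1 Ω lam) (topPI1 Ω lam)]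
        ((fun p : (Ω → Ω) × (Ω → Ω) => p.2 ∘ p.1) ⁻¹' s) :=
      isOpen_preimage' (comp_cont1 lam) hs
    exact h0.mono (prod_le_prod' (t2_le_t1 lam) (t2_le_t1 lam))
  · rw [Set.mem_singleton_iff] at hs
    subst hs
    refine (@isOpen_prod_iff _ _ (topPI2 Ω lam) (topPI2 Ω lam) _).mpr ?_
    intro f g hfg
    by_cases hf : f ∈ idealSet Ω lam
    · exact ⟨idealSet Ω lam, Set.univ, ideal_open2 lam, @isOpen_univ _ (topPI2 Ω lam), hf,
        trivial, fun q hq => comp_mem_ideal_left hq.1⟩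
    · by_cases hg : g ∈ idealSet Ω lam
      · exact ⟨Set.univ, idealSet Ω lam, @isOpen_univ _ (topPI2 Ω lam), ideal_open2 lam,
          trivial, hg, fun q hq => comp_mem_ideal_right hq.2⟩
      · refine ⟨{f}, {g}, le12 (compl_le1 lam ?_), le12 (compl_le1 lam ?_), rfl, rfl, ?_⟩
        · intro x hx
          rw [Set.mem_singleton_iff] at hx
          subst hx; exact hf
        · intro x hx
          rw [Set.mem_singleton_iff] at hx
          subst hx; exact hg
        · rintro ⟨f', g'⟩ ⟨hf', hg'⟩
          have h1 : f' = f := hf'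
          have h2 : g' = g := hg'
          subst h1; subst h2
          exact hfg

lemma pw_t2 (Ω : Type u) : @T2Space (Ω → Ω) (pointwiseTop Ω) := by
  letI : TopologicalSpace Ω := ⊥
  haveI : DiscreteTopology Ω := ⟨rfl⟩
  have hT : T2Space (Ω → Ω) := inferInstance
  exact hT

/-! ### non-openness results -/

lemma const_mem_ideal {lam : Cardinal.{u}} (h1 : 1 < lam) (c : Ω) :
    (fun _ : Ω => c) ∈ idealSet Ω lam := by
  have hle : Cardinal.mk (Set.range fun _ : Ω => c) ≤ 1 :=
    Cardinal.mk_le_one_iff_set_subsingleton.mpr fun a ha b hb => by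
      obtain ⟨x, rfl⟩ := ha
      obtain ⟨y, rfl⟩ := hb
      rfl
  exact lt_of_le_of_lt hle h1

lemma ideal_not_open1 [Infinite Ω] (lam : Cardinal.{u}) (h1 : 1 < lam)
    (h2 : lam ≤ Cardinal.mk Ω) : ¬ IsOpen[topPI1 Ω lam] (idealSet Ω lam) := by
  intro h
  obtain ⟨V, hV, hVI, hIV⟩ := isOpen1_iff.mp h
  obtain ⟨c⟩ : Nonempty Ω := inferInstance
  have hconst : (fun _ : Ω => c) ∈ idealSet Ω lam := const_mem_ideal h1 c
  have hcV : (fun _ : Ω => c) ∈ V := hIV ⟨hconst, hconst⟩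
  obtain ⟨F, hF, hbox⟩ := exists_box hV hcV
  classical
  set f : Ω → Ω := fun x => if x ∈ F then c else x with hfdef
  have hfbox : f ∈ {f : Ω → Ω | ∀ x ∈ F, f x = c} := fun x hx => if_pos hx
  have hfI : f ∈ idealSet Ω lam := hVI (hbox hfbox)
  have hsub : Fᶜ ⊆ Set.range f := fun x hx => ⟨x, if_neg hx⟩
  have hFsmall : Cardinal.mk F < Cardinal.mk Ω :=
    lt_of_lt_of_le hF.lt_aleph0 (Cardinal.infinite_iff.mp inferInstance)
  have h3 : Cardinal.mk (Fᶜ : Set Ω) = Cardinal.mk Ω := Cardinal.mk_compl_of_infinite F hFsmall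
  have hbig : lam ≤ Cardinal.mk (Set.range f) :=
    h2.trans (h3 ▸ Cardinal.mk_le_mk_of_subset hsub)
  exact absurd hfI (not_lt.mpr hbig)

lemma exists_rank_eq [Infinite Ω] {lam : Cardinal.{u}} (h1 : 0 < lam)
    (hle : lam ≤ Cardinal.mk Ω) : ∃ h : Ω → Ω, Cardinal.mk (Set.range h) = lam := by
  obtain ⟨S, hS⟩ := Cardinal.le_mk_iff_exists_set.mp hle
  have hne : Nonempty S := Cardinal.mk_ne_zero_iff.mp (by rw [hS]; exact ne_of_gt h1)
  obtain ⟨⟨s₀, hs₀⟩⟩ := hne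
  classical
  refine ⟨fun x => if x ∈ S then x else s₀, ?_⟩
  have hrange : Set.range (fun x => if x ∈ S then x else s₀) = S := by
    apply Set.Subset.antisymm
    · rintro y ⟨x, rfl⟩
      show (if x ∈ S then x else s₀) ∈ S
      by_cases hx : x ∈ S
      · rw [if_pos hx]; exact hx
      · rw [if_neg hx]; exact hs₀
    · intro y hy
      exact ⟨y, if_pos hy⟩
  rw [hrange, hS]

lemma singleton_not_open2 [Infinite Ω] {lam kap : Cardinal.{u}} (h1 : 1 < lam) {h : Ω → Ω}
    (hrank : Cardinal.mk (Set.range h) = lam) (hlk : lam < kap) :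
    ¬ IsOpen[topPI2 Ω kap] {h} := by
  intro hop
  obtain ⟨W, hW, hEq⟩ := isOpen2_iff.mp hop
  have hhI : h ∈ idealSet Ω kap := by
    show Cardinal.mk (Set.range h) < kap
    rw [hrank]; exact hlk
  have hhW : h ∈ W := by
    have : h ∈ ({h} : Set (Ω → Ω)) ∩ idealSet Ω kap := ⟨rfl, hhI⟩
    rw [hEq] at this
    exact this.1
  obtain ⟨F, hF, hbox⟩ := exists_box hW hhW
  obtain ⟨y₀, hy₀⟩ := hF.infinite_compl.nonempty
  have hu : ∃ u ∈ Set.range h, u ≠ h y₀ := by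
    by_contra hc
    push_neg at hc
    have hle : Cardinal.mk (Set.range h) ≤ 1 :=
      Cardinal.mk_le_one_iff_set_subsingleton.mpr fun a ha b hb =>
        (hc a ha).trans (hc b hb).symm
    rw [hrank] at hle
    exact absurd hle (not_le.mpr h1)
  obtain ⟨u, huR, hune⟩ := hu
  classical
  set f : Ω → Ω := fun x => if x ∈ F then h x else u with hfdef
  have hfbox : f ∈ {f : Ω → Ω | ∀ x ∈ F, f x = h x} := fun x hx => if_pos hx
  have hfW : f ∈ W := hbox hfbox
  have hfI : f ∈ idealSet Ω kap := by
    have hsub : Set.range f ⊆ Set.range h := by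
      rintro y ⟨x, rfl⟩
      by_cases hx : x ∈ F
      · have : f x = h x := if_pos hx
        rw [this]; exact ⟨x, rfl⟩
      · have : f x = u := if_neg hx
        rw [this]; exact huR
    have := Cardinal.mk_le_mk_of_subset hsub
    rw [hrank] at this
    exact lt_of_le_of_lt this hlk
  have hmem : f ∈ W ∩ idealSet Ω kap := ⟨hfW, hfI⟩
  rw [← hEq] at hmem
  have hfh : f = h := hmem.1
  have hfy : f y₀ = u := if_neg hy₀
  rw [hfh] at hfy
  exact hune hfy.symm

/-! ### part (d) -/

lemma two_lt_aux {c : Cardinal.{u}} (h : c < 2) : c ≤ 1 := by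
  have h2 : Order.succ (1 : Cardinal) = 2 := by
    have := Cardinal.succ_natCast 1
    norm_num at this
    exact this
  rw [← h2] at h
  exact Order.lt_succ_iff.mp h

lemma singleton_open2_two [Infinite Ω] (f : Ω → Ω) : IsOpen[topPI2 Ω 2] {f} := by
  classical
  by_cases hf : f ∈ idealSet Ω 2
  · obtain ⟨x₀⟩ : Nonempty Ω := inferInstance
    have hconst : ∀ g ∈ idealSet Ω 2, ∀ x, g x = g x₀ := by
      intro g hg x
      have hle : Cardinal.mk (Set.range g) ≤ 1 := two_lt_aux hg
      have hsub := Cardinal.mk_le_one_iff_set_subsingleton.mp hle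
      exact hsub (Set.mem_range_self x) (Set.mem_range_self x₀)
    have hset : ({f} : Set (Ω → Ω)) = idealSet Ω 2 ∩ {g : Ω → Ω | g x₀ = f x₀} := by
      ext g
      constructor
      · intro hg
        rw [Set.mem_singleton_iff] at hg
        subst hg
        exact ⟨hf, rfl⟩
      · rintro ⟨hg, hgx⟩
        rw [Set.mem_singleton_iff]
        funext x
        calc g x = g x₀ := hconst g hg x
          _ = f x₀ := hgx
          _ = f x := (hconst f hf x).symm
    rw [hset]
    exact isOpen_inter' (ideal_open2 2) (le12 (pw_le1 2 (pw_single x₀ (f x₀))))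
  · refine le12 (compl_le1 2 ?_)
    intro g hg
    rw [Set.mem_singleton_iff] at hg
    subst hg
    exact hf

end Aux

theorem stmt8 {Ω : Type u} [Infinite Ω] :
    -- (a) each topology is Hausdorff and makes `Ω → Ω` a topological semigroup
    (∀ lam : Cardinal.{u}, 1 < lam → lam ≤ Cardinal.mk Ω →
      @T2Space (Ω → Ω) (topPI1 Ω lam) ∧ @T2Space (Ω → Ω) (topPI2 Ω lam) ∧
      Continuous[@instTopologicalSpaceProd _ _ (topPI1 Ω lam) (topPI1 Ω lam),
        topPI1 Ω lam] (fun p : (Ω → Ω) × (Ω → Ω) => p.2 ∘ p.1) ∧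
      Continuous[@instTopologicalSpaceProd _ _ (topPI2 Ω lam) (topPI2 Ω lam),
        topPI2 Ω lam] (fun p : (Ω → Ω) × (Ω → Ω) => p.2 ∘ p.1)) ∧
    -- (b) `topPI1` is strictly contained in `topPI2`
    (∀ lam : Cardinal.{u}, 1 < lam → lam ≤ Cardinal.mk Ω →
      (∀ U : Set (Ω → Ω), IsOpen[topPI1 Ω lam] U → IsOpen[topPI2 Ω lam] U) ∧
      ∃ U : Set (Ω → Ω), IsOpen[topPI2 Ω lam] U ∧ ¬ IsOpen[topPI1 Ω lam] U) ∧
    -- (c) for `1 < λ < κ ≤ |Ω|`, the `κ`-topology is strictly contained in the `λ`-one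
    (∀ lam kap : Cardinal.{u}, 1 < lam → lam < kap → kap ≤ Cardinal.mk Ω →
      ((∀ U : Set (Ω → Ω), IsOpen[topPI1 Ω kap] U → IsOpen[topPI1 Ω lam] U) ∧
        ∃ U : Set (Ω → Ω), IsOpen[topPI1 Ω lam] U ∧ ¬ IsOpen[topPI1 Ω kap] U) ∧
      ((∀ U : Set (Ω → Ω), IsOpen[topPI2 Ω kap] U → IsOpen[topPI2 Ω lam] U) ∧
        ∃ U : Set (Ω → Ω), IsOpen[topPI2 Ω lam] U ∧ ¬ IsOpen[topPI2 Ω kap] U)) ∧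
    -- (d) `topPI2 Ω 2` is the discrete topology
    topPI2 Ω 2 = ⊥ := by
  refine ⟨?_, ?_, ?_, ?_⟩
  · -- (a)
    intro lam h1 h2
    have ht1 : @T2Space (Ω → Ω) (topPI1 Ω lam) := t2Space_antitone (t1_le_pw lam) (pw_t2 Ω)
    have ht2 : @T2Space (Ω → Ω) (topPI2 Ω lam) :=
      t2Space_antitone ((t2_le_t1 lam).trans (t1_le_pw lam)) (pw_t2 Ω)
    exact ⟨ht1, ht2, comp_cont1 lam, comp_cont2 lam⟩
  · -- (b)
    intro lam h1 h2
    refine ⟨fun U hU => le12 hU, idealSet Ω lam, ideal_open2 lam, ideal_not_open1 lam h1 h2⟩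
  · -- (c)
    intro lam kap h1 hlk hk
    have hIsub : idealSet Ω lam ⊆ idealSet Ω kap := fun f hf => lt_trans hf hlk
    have hle1 : topPI1 Ω lam ≤ topPI1 Ω kap := by
      refine le_generateFrom ?_
      rintro s (hs | hs)
      · exact pw_le1 lam hs
      · exact compl_le1 lam (hs.trans (Set.compl_subset_compl.mpr hIsub))
    have hle2 : topPI2 Ω lam ≤ topPI2 Ω kap := by
      refine le_generateFrom ?_
      rintro s (hs | hs)
      · exact le12 (hle1 s hs)
      · rw [Set.mem_singleton_iff] at hs
        subst hs
        refine isOpen2_iff.mpr ⟨Set.univ, @isOpen_univ _ (pointwiseTop Ω), ?_⟩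
        apply Set.Subset.antisymm
        · exact fun x hx => ⟨trivial, hx.2⟩
        · exact fun x hx => ⟨hIsub hx.2, hx.2⟩
    obtain ⟨h, hrank⟩ := exists_rank_eq (lt_trans zero_lt_one h1) ((le_of_lt hlk).trans hk)
    have hopen1 : IsOpen[topPI1 Ω lam] {h} := by
      refine compl_le1 lam ?_
      intro g hg
      rw [Set.mem_singleton_iff] at hg
      subst hg
      show ¬ Cardinal.mk (Set.range g) < lam
      rw [hrank]
      exact lt_irrefl lam
    have hnot2 : ¬ IsOpen[topPI2 Ω kap] {h} := singleton_not_open2 h1 hrank hlk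
    have hnot1 : ¬ IsOpen[topPI1 Ω kap] {h} := fun hc => hnot2 (le12 hc)
    exact ⟨⟨fun U hU => hU.mono hle1, {h}, hopen1, hnot1⟩,
      ⟨fun U hU => hU.mono hle2, {h}, le12 hopen1, hnot2⟩⟩
  · -- (d)
    exact eq_bot_of_singletons_open singleton_open2_two
end

section
/- Let Ω be an infinite set, let B be the collection of all sets of the form ∏_{α∈Ω} Σ_α = {f ∈ Ω^Ω : f(α) ∈ Σ_α for all α ∈ Ω}, where the Σ_α ⊆ Ω satisfy |{α ∈ Ω : β ∉ Σ_α}| < |Ω| for every β ∈ Ω, and let T be the topology on Ω^Ω generated by B. Then: (a) B is closed under finite intersections and is a base for T; (b) any base for T has strictly more than |Ω| elements; (c) T strictly contains the pointwise topology on Ω^Ω, and in particular T is Hausdorff; (d) T is perfect; (e) no nonempty element of B is contained in a compact subset of Ω^Ω (with respect to T). -/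
open Topology TopologicalSpace

universe u

/-- The collection of sets `∏_{α ∈ Ω} Σ_α` with
`|{α : β ∉ Σ_α}| < |Ω|` for every `β`. -/
def bigBase (Ω : Type u) : Set (Set (Ω → Ω)) :=
  {X : Set (Ω → Ω) | ∃ sig : Ω → Set Ω,
    (∀ β : Ω, Cardinal.mk {α : Ω | β ∉ sig α} < Cardinal.mk Ω) ∧
    X = {f : Ω → Ω | ∀ α, f α ∈ sig α}}

namespace Stmt14Aux

open Cardinal

variable {Ω : Type u}

lemma small_union [Infinite Ω] {A B : Set Ω} (hA : #A < #Ω) (hB : #B < #Ω) :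
    #(↥(A ∪ B)) < #Ω :=
  lt_of_le_of_lt (mk_union_le A B)
    (add_lt_of_lt (infinite_iff.mp ‹_›) hA hB)

lemma small_subsingleton [Infinite Ω] {A : Set Ω} (h : A.Subsingleton) : #A < #Ω :=
  lt_of_le_of_lt (mk_le_one_iff_set_subsingleton.mpr h)
    (lt_of_lt_of_le one_lt_aleph0 (infinite_iff.mp ‹_›))

lemma small_finite [Infinite Ω] {A : Set Ω} (h : A.Finite) : #A < #Ω :=
  lt_of_lt_of_le h.lt_aleph0 (infinite_iff.mp ‹_›)

lemma exists_not_mem {A : Set Ω} (h : #A < #Ω) : ∃ c, c ∉ A := by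
  by_contra hc
  push_neg at hc
  have : A = Set.univ := Set.eq_univ_of_forall hc
  rw [this, mk_univ] at h
  exact lt_irrefl _ h

lemma cyl_mem [Infinite Ω] (a b : Ω) : {f : Ω → Ω | f a = b} ∈ bigBase Ω := by
  classical
  refine ⟨fun c => if c = a then {b} else Set.univ, fun β => ?_, ?_⟩
  · apply small_subsingleton
    have hsub : {α | β ∉ if α = a then ({b} : Set Ω) else Set.univ} ⊆ {a} := by
      intro c hc
      by_contra hne
      simp only [Set.mem_singleton_iff] at hne
      simp only [Set.mem_setOf_eq, if_neg hne, Set.mem_univ, not_true] at hc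
    exact Set.subsingleton_singleton.anti hsub
  · ext f
    simp only [Set.mem_setOf_eq]
    constructor
    · intro h c
      by_cases hc : c = a
      · subst hc; rw [if_pos rfl]; exact h
      · rw [if_neg hc]; exact Set.mem_univ _
    · intro h
      have := h a
      rw [if_pos rfl] at this
      exact this

lemma inter_mem [Infinite Ω] {X Y : Set (Ω → Ω)} (hX : X ∈ bigBase Ω)
    (hY : Y ∈ bigBase Ω) : X ∩ Y ∈ bigBase Ω := by
  obtain ⟨s1, h1, rfl⟩ := hX
  obtain ⟨s2, h2, rfl⟩ := hY
  refine ⟨fun c => s1 c ∩ s2 c, fun β => ?_, ?_⟩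
  · have hsub : {α | β ∉ s1 α ∩ s2 α} ⊆ {α | β ∉ s1 α} ∪ {α | β ∉ s2 α} := by
      intro c hc
      simp only [Set.mem_setOf_eq, Set.mem_inter_iff, not_and_or] at hc
      simpa only [Set.mem_union, Set.mem_setOf_eq] using hc
    exact lt_of_le_of_lt (mk_le_mk_of_subset hsub) (small_union (h1 β) (h2 β))
  · ext f
    simp only [Set.mem_inter_iff, Set.mem_setOf_eq, ← forall_and]

lemma univ_mem [Infinite Ω] : (Set.univ : Set (Ω → Ω)) ∈ bigBase Ω := by
  refine ⟨fun _ => Set.univ, fun β => ?_, by ext f; simp⟩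
  exact small_subsingleton (fun x hx y hy => (hx (Set.mem_univ β)).elim)

lemma isBasis [Infinite Ω] :
    @IsTopologicalBasis (Ω → Ω) (generateFrom (bigBase Ω)) (bigBase Ω) := by
  letI : TopologicalSpace (Ω → Ω) := generateFrom (bigBase Ω)
  refine ⟨fun t₁ h₁ t₂ h₂ x hx => ⟨t₁ ∩ t₂, inter_mem h₁ h₂, hx, subset_rfl⟩, ?_, rfl⟩
  exact Set.eq_univ_of_univ_subset (Set.subset_sUnion_of_mem univ_mem)

lemma cylOpen [Infinite Ω] (a b : Ω) :
    IsOpen[generateFrom (bigBase Ω)] {f : Ω → Ω | f a = b} :=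
  isOpen_generateFrom_of_mem (cyl_mem a b)

lemma exists_injective_seq {good : ℕ → Set Ω}
    (h : ∀ (m : ℕ) (t : Finset Ω), ∃ c, c ∈ good m ∧ c ∉ t) :
    ∃ a : ℕ → Ω, Function.Injective a ∧ ∀ m, a m ∈ good m := by
  classical
  choose pick hg ht using h
  let F : ℕ → Finset Ω := fun m => Nat.rec ∅ (fun k s => insert (pick k s) s) m
  let a : ℕ → Ω := fun m => pick m (F m)
  have hFsucc : ∀ m, F (m + 1) = insert (a m) (F m) := fun m => rfl
  have hmono : Monotone F := monotone_nat_of_le_succ (fun m => by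
    rw [hFsucc]; exact Finset.subset_insert _ _)
  have hmem : ∀ {k m : ℕ}, k < m → a k ∈ F m := by
    intro k m hkm
    have h1 : a k ∈ F (k + 1) := by rw [hFsucc]; exact Finset.mem_insert_self _ _
    exact hmono hkm h1
  refine ⟨a, ?_, fun m => hg m (F m)⟩
  intro k m he
  by_contra hne
  rcases lt_or_gt_of_ne hne with h | h
  · have hmm := hmem h
    rw [he] at hmm
    exact ht m (F m) hmm
  · have hmm := hmem h
    rw [← he] at hmm
    exact ht k (F k) hmm

lemma partB [Infinite Ω] (C : Set (Set (Ω → Ω)))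
    (hC : @IsTopologicalBasis (Ω → Ω) (generateFrom (bigBase Ω)) C) :
    Cardinal.mk Ω < Cardinal.mk C := by
  classical
  letI : TopologicalSpace (Ω → Ω) := generateFrom (bigBase Ω)
  by_contra hlt
  obtain ⟨e⟩ := (Cardinal.le_def ↥C Ω).mp (not_lt.mp hlt)
  have Hch : ∀ U : ↥C, id ∈ (U : Set (Ω → Ω)) → ∃ p : (Ω → Set Ω) × Ω,
      (∀ β, #{α | β ∉ p.1 α} < #Ω) ∧ (∀ c, c ∈ p.1 c) ∧
      {f : Ω → Ω | ∀ c, f c ∈ p.1 c} ⊆ (U : Set (Ω → Ω)) ∧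
      e U ∈ p.1 p.2 ∧ p.2 ≠ e U := by
    intro U hU
    obtain ⟨V, hV, hidV, hVU⟩ :=
      (isBasis (Ω := Ω)).exists_subset_of_mem_open hU (hC.isOpen U.2)
    obtain ⟨sig, hsmall, rfl⟩ := hV
    obtain ⟨c, hc⟩ := exists_not_mem
      (small_union (hsmall (e U)) (small_subsingleton (Set.subsingleton_singleton (a := e U))))
    simp only [Set.mem_union, Set.mem_setOf_eq, Set.mem_singleton_iff, not_or, not_not] at hc
    exact ⟨⟨sig, c⟩, hsmall, fun c' => hidV c', hVU, hc.1, hc.2⟩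
  choose p h1 h2 h3 h4 h5 using Hch
  set sigW : Ω → Set Ω :=
    fun c => {b | ∀ (U : ↥C) (h : id ∈ (U : Set (Ω → Ω))), (p U h).2 = c → e U ≠ b}
    with hsigW
  have hWmem : {f : Ω → Ω | ∀ c, f c ∈ sigW c} ∈ bigBase Ω := by
    refine ⟨sigW, fun β => ?_, rfl⟩
    apply small_subsingleton
    intro c₁ hc₁ c₂ hc₂
    simp only [hsigW, Set.mem_setOf_eq] at hc₁ hc₂
    push_neg at hc₁ hc₂
    obtain ⟨U₁, hh₁, ha₁, hb₁⟩ := hc₁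
    obtain ⟨U₂, hh₂, ha₂, hb₂⟩ := hc₂
    have hU : U₁ = U₂ := e.injective (hb₁.trans hb₂.symm)
    subst hU
    rw [← ha₁, ← ha₂]
  have hidW : id ∈ {f : Ω → Ω | ∀ c, f c ∈ sigW c} := by
    intro c U h hpc
    have := h5 U h
    rw [hpc] at this
    exact this.symm
  obtain ⟨U, hU, hidU, hUW⟩ :=
    hC.exists_subset_of_mem_open hidW (isOpen_generateFrom_of_mem hWmem)
  set U' : ↥C := ⟨U, hU⟩
  have hidU' : id ∈ (U' : Set (Ω → Ω)) := hidU
  set aU := (p U' hidU').2 with haU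
  have hfV : Function.update id aU (e U') ∈ {f : Ω → Ω | ∀ c, f c ∈ (p U' hidU').1 c} := by
    intro c
    by_cases hc : c = aU
    · subst hc; rw [Function.update_self]; exact h4 U' hidU'
    · rw [Function.update_of_ne hc]; exact h2 U' hidU' c
  have hfW := hUW (h3 U' hidU' hfV)
  have hcontra := hfW aU U' hidU' rfl
  exact hcontra (Function.update_self aU (e U') id).symm

lemma partC1 [Infinite Ω] : ∀ U : Set (Ω → Ω), IsOpen[pointwiseTop Ω] U →
    IsOpen[generateFrom (bigBase Ω)] U := by
  letI : TopologicalSpace (Ω → Ω) := generateFrom (bigBase Ω)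
  have hle : generateFrom (bigBase Ω) ≤ pointwiseTop Ω := by
    rw [← @continuous_id_iff_le _ (generateFrom (bigBase Ω)) (pointwiseTop Ω)]
    have hpt : pointwiseTop Ω = @Pi.topologicalSpace Ω (fun _ => Ω) (fun _ => ⊥) := rfl
    rw [hpt]
    refine (@continuous_pi_iff (Ω → Ω) Ω (fun _ => Ω) (generateFrom (bigBase Ω))
      (fun _ => ⊥) id).mpr fun a => ?_
    refine continuous_def.mpr fun s _ => ?_
    have heq : (fun f : Ω → Ω => id f a) ⁻¹' s = ⋃ b ∈ s, {f : Ω → Ω | f a = b} := by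
      ext f
      simp only [Set.mem_preimage, Set.mem_iUnion, Set.mem_setOf_eq, id]
      exact ⟨fun h => ⟨f a, h, rfl⟩, fun ⟨b, hb, he⟩ => he ▸ hb⟩
    rw [heq]
    exact isOpen_biUnion fun b _ => cylOpen a b
  exact fun U hU => hU.mono hle

lemma partC2 [Infinite Ω] : ∃ U : Set (Ω → Ω), IsOpen[generateFrom (bigBase Ω)] U ∧
    ¬ IsOpen[pointwiseTop Ω] U := by
  classical
  refine ⟨{f : Ω → Ω | ∀ c, f c ∈ {b : Ω | b ≠ c}}, ?_, ?_⟩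
  · refine isOpen_generateFrom_of_mem ⟨fun c => {b : Ω | b ≠ c}, fun β => ?_, rfl⟩
    apply small_subsingleton
    intro c₁ h₁ c₂ h₂
    simp only [Set.mem_setOf_eq, not_not] at h₁ h₂
    rw [← h₁, ← h₂]
  · intro hop
    have hop' : @IsOpen _ (@Pi.topologicalSpace Ω (fun _ => Ω) (fun _ => ⊥))
        {f : Ω → Ω | ∀ c, f c ∈ {b : Ω | b ≠ c}} := hop
    obtain ⟨x, y, hxy⟩ := exists_pair_ne Ω
    have hf : (fun c => if c = x then y else x) ∈
        {f : Ω → Ω | ∀ c, f c ∈ {b : Ω | b ≠ c}} := by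
      intro c
      by_cases hc : c = x
      · subst hc; simp only [if_pos rfl, Set.mem_setOf_eq]; exact hxy.symm
      · simp only [if_neg hc, Set.mem_setOf_eq]
        exact fun h => hc h.symm
    obtain ⟨I, u, hIu, hsub⟩ := (@isOpen_pi_iff Ω (fun _ => Ω) (fun _ => ⊥) _).mp hop'
      _ hf
    obtain ⟨a₀, ha₀⟩ := Infinite.exists_notMem_finset I
    have hmem : Function.update (fun c => if c = x then y else x) a₀ a₀ ∈ (↑I : Set Ω).pi u := by
      intro i hi
      rw [Function.update_of_ne (fun h : i = a₀ => ha₀ (h ▸ hi))]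
      exact (hIu i hi).2
    have := hsub hmem a₀
    rw [Function.update_self] at this
    exact this rfl

lemma partT2 [Infinite Ω] : @T2Space (Ω → Ω) (generateFrom (bigBase Ω)) := by
  letI : TopologicalSpace (Ω → Ω) := generateFrom (bigBase Ω)
  refine ⟨fun f g hfg => ?_⟩
  obtain ⟨a, ha⟩ := Function.ne_iff.mp hfg
  refine ⟨{h | h a = f a}, {h | h a = g a}, cylOpen a (f a), cylOpen a (g a), rfl, rfl, ?_⟩
  rw [Set.disjoint_left]
  intro h h1 h2
  exact ha (h1.symm.trans h2)

lemma partD [Infinite Ω] (f : Ω → Ω) :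
    ¬ IsOpen[generateFrom (bigBase Ω)] ({f} : Set (Ω → Ω)) := by
  classical
  letI : TopologicalSpace (Ω → Ω) := generateFrom (bigBase Ω)
  intro hop
  obtain ⟨V, hV, hfV, hsub⟩ :=
    (isBasis (Ω := Ω)).exists_subset_of_mem_open (Set.mem_singleton f) hop
  obtain ⟨sig, hsmall, rfl⟩ := hV
  obtain ⟨β₁, β₂, hβ⟩ := exists_pair_ne Ω
  obtain ⟨c, hc⟩ := exists_not_mem (small_union (hsmall β₁) (hsmall β₂))
  simp only [Set.mem_union, Set.mem_setOf_eq, not_or, not_not] at hc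
  set b : Ω := if β₁ = f c then β₂ else β₁ with hb
  have hbmem : b ∈ sig c := by
    by_cases h : β₁ = f c
    · rw [hb, if_pos h]; exact hc.2
    · rw [hb, if_neg h]; exact hc.1
  have hbne : b ≠ f c := by
    by_cases h : β₁ = f c
    · rw [hb, if_pos h]; exact fun he => hβ (h.trans he.symm)
    · rw [hb, if_neg h]; exact h
  have hmem : Function.update f c b ∈ {f' : Ω → Ω | ∀ α, f' α ∈ sig α} := by
    intro α
    by_cases hα : α = c
    · subst hα; rw [Function.update_self]; exact hbmem
    · rw [Function.update_of_ne hα]; exact hfV α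
  have := congrFun (Set.mem_singleton_iff.mp (hsub hmem)) c
  rw [Function.update_self] at this
  exact hbne this

lemma partE [Infinite Ω] {X : Set (Ω → Ω)} (hX : X ∈ bigBase Ω) (hne : X.Nonempty)
    (K : Set (Ω → Ω)) (hK : @IsCompact _ (generateFrom (bigBase Ω)) K) : ¬ X ⊆ K := by
  classical
  letI : TopologicalSpace (Ω → Ω) := generateFrom (bigBase Ω)
  intro hXK
  obtain ⟨sig, hsmall, rfl⟩ := hX
  obtain ⟨s, hs⟩ := hne
  set β : ℕ → Ω := fun n => Infinite.natEmbedding Ω n with hβdef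
  have hβinj : Function.Injective β := (Infinite.natEmbedding Ω).injective
  have hsmallm : ∀ m : ℕ, #{c : Ω | ∃ n ≤ m, β n ∉ sig c} < #Ω := by
    intro m
    induction m with
    | zero =>
      have heq : {c : Ω | ∃ n ≤ 0, β n ∉ sig c} = {c | β 0 ∉ sig c} := by
        ext c; simp [Nat.le_zero]
      rw [heq]; exact hsmall (β 0)
    | succ k ih =>
      have heq : {c : Ω | ∃ n ≤ k + 1, β n ∉ sig c} =
          {c | ∃ n ≤ k, β n ∉ sig c} ∪ {c | β (k + 1) ∉ sig c} := by
        ext c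
        simp only [Set.mem_setOf_eq, Set.mem_union]
        constructor
        · rintro ⟨n, hn, h⟩
          rcases Nat.lt_or_ge n (k + 1) with h' | h'
          · exact Or.inl ⟨n, Nat.lt_succ_iff.mp h', h⟩
          · have : n = k + 1 := le_antisymm hn h'
            exact Or.inr (this ▸ h)
        · rintro (⟨n, hn, h⟩ | h)
          · exact ⟨n, le_trans hn (Nat.le_succ k), h⟩
          · exact ⟨k + 1, le_refl _, h⟩
      rw [heq]; exact small_union ih (hsmall _)
  have hgood : ∀ (m : ℕ) (t : Finset Ω),
      ∃ c, c ∈ {c : Ω | ∀ n ≤ m, β n ∈ sig c} ∧ c ∉ t := by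
    intro m t
    obtain ⟨c, hc⟩ := exists_not_mem (small_union (hsmallm m) (small_finite t.finite_toSet))
    refine ⟨c, fun n hn => ?_, fun h => hc (Set.mem_union_right _ h)⟩
    by_contra h
    exact hc (Set.mem_union_left _ ⟨n, hn, h⟩)
  obtain ⟨a, hainj, ha⟩ := exists_injective_seq hgood
  set x : ℕ → (Ω → Ω) := fun n => Function.extend a (fun m => β (min n m)) s with hxdef
  have hxval : ∀ n m, x n (a m) = β (min n m) := fun n m =>
    hainj.extend_apply _ _ m
  have hxX : ∀ n, x n ∈ {f : Ω → Ω | ∀ α, f α ∈ sig α} := by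
    intro n c
    by_cases h : ∃ m, a m = c
    · obtain ⟨m, rfl⟩ := h
      rw [hxval]
      exact ha m _ (Nat.min_le_right n m)
    · have : x n c = s c := Function.extend_apply' _ _ _ h
      rw [this]
      exact hs c
  haveI : (Filter.map x Filter.atTop).NeBot := Filter.atTop_neBot.map x
  have hle : Filter.map x Filter.atTop ≤ Filter.principal K := by
    rw [Filter.le_principal_iff, Filter.mem_map]
    exact Filter.univ_mem' fun n => hXK (hxX n)
  obtain ⟨g, hgK, hcl⟩ := hK hle
  have hfreq : ∀ (U : Set (Ω → Ω)), IsOpen U → g ∈ U → ∀ N : ℕ, ∃ n ≥ N, x n ∈ U := by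
    intro U hUo hgU N
    have hV : x '' Set.Ici N ∈ Filter.map x Filter.atTop :=
      Filter.image_mem_map (Filter.Ici_mem_atTop N)
    obtain ⟨y, hyU, n, hn, rfl⟩ := clusterPt_iff_nonempty.mp hcl (hUo.mem_nhds hgU) hV
    exact ⟨n, hn, hyU⟩
  have hg : ∀ m, g (a m) = β m := by
    intro m
    obtain ⟨n, hn, hx⟩ := hfreq {h | h (a m) = g (a m)} (cylOpen _ _) rfl m
    have hx' : x n (a m) = g (a m) := hx
    rw [hxval, min_eq_right hn] at hx'
    exact hx'.symm
  set sigW : Ω → Set Ω := fun c => {b | ∀ m, a (m + 1) = c → b ≠ β m} with hsigWdef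
  have hWmem : {f : Ω → Ω | ∀ c, f c ∈ sigW c} ∈ bigBase Ω := by
    refine ⟨sigW, fun βv => ?_, rfl⟩
    apply small_subsingleton
    intro c₁ hc₁ c₂ hc₂
    simp only [hsigWdef, Set.mem_setOf_eq] at hc₁ hc₂
    push_neg at hc₁ hc₂
    obtain ⟨m₁, ha₁, hb₁⟩ := hc₁
    obtain ⟨m₂, ha₂, hb₂⟩ := hc₂
    have : m₁ = m₂ := hβinj (hb₁.symm.trans hb₂)
    rw [← ha₁, ← ha₂, this]
  have hgW : g ∈ {f : Ω → Ω | ∀ c, f c ∈ sigW c} := by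
    intro c m hm hbe
    rw [← hm, hg (m + 1)] at hbe
    exact Nat.succ_ne_self m (hβinj hbe)
  obtain ⟨n, -, hxW⟩ := hfreq _ (isOpen_generateFrom_of_mem hWmem) hgW 0
  have hcontra := hxW (a (n + 1)) n rfl
  rw [hxval, min_eq_left (Nat.le_succ n)] at hcontra
  exact hcontra rfl

end Stmt14Aux

theorem stmt14 {Ω : Type u} [Infinite Ω] :
    -- (a) closed under finite intersections, and a base for the generated topology
    (∀ s : Finset (Set (Ω → Ω)), ↑s ⊆ bigBase Ω →
      ⋂₀ (s : Set (Set (Ω → Ω))) ∈ bigBase Ω) ∧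
    @IsTopologicalBasis (Ω → Ω) (generateFrom (bigBase Ω)) (bigBase Ω) ∧
    -- (b) any base has strictly more than `|Ω|` elements
    (∀ C : Set (Set (Ω → Ω)),
      @IsTopologicalBasis (Ω → Ω) (generateFrom (bigBase Ω)) C →
      Cardinal.mk Ω < Cardinal.mk C) ∧
    -- (c) strictly contains the pointwise topology; in particular Hausdorff
    ((∀ U : Set (Ω → Ω), IsOpen[pointwiseTop Ω] U →
        IsOpen[generateFrom (bigBase Ω)] U) ∧
      (∃ U : Set (Ω → Ω), IsOpen[generateFrom (bigBase Ω)] U ∧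
        ¬ IsOpen[pointwiseTop Ω] U) ∧
      @T2Space (Ω → Ω) (generateFrom (bigBase Ω))) ∧
    -- (d) the topology is perfect
    (∀ f : Ω → Ω, ¬ IsOpen[generateFrom (bigBase Ω)] ({f} : Set (Ω → Ω))) ∧
    -- (e) no nonempty basic set is contained in a compact set
    (∀ X ∈ bigBase Ω, X.Nonempty → ∀ K : Set (Ω → Ω),
      @IsCompact (Ω → Ω) (generateFrom (bigBase Ω)) K → ¬ X ⊆ K) := by
  refine ⟨?_, Stmt14Aux.isBasis, Stmt14Aux.partB,
    ⟨Stmt14Aux.partC1, Stmt14Aux.partC2, Stmt14Aux.partT2⟩, Stmt14Aux.partD,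
    fun X hX hne K hK => Stmt14Aux.partE hX hne K hK⟩
  classical
  intro s
  induction s using Finset.induction_on with
  | empty =>
    intro _
    simpa using Stmt14Aux.univ_mem
  | @insert X t hnot ih =>
    intro hs
    rw [Finset.coe_insert, Set.sInter_insert]
    exact Stmt14Aux.inter_mem (hs (Finset.mem_insert_self _ _))
      (ih fun Y hY => hs (Finset.mem_insert_of_mem hY))
end
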